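/- arXiv:1909.11623 — 2 statements merged into one kernel-verified Lean document; each statement's English description precedes it below -/
import Mathlib

section
/- Let $\mathcal{A}$ be a $\kappa$-independent family of cardinality $\kappa$ and $A \subseteq \kappa$ a set such that $\mathcal{A}^h \cap A$ is unbounded for every $h \in \mathrm{FF}_{<\omega,\kappa}(\mathcal{A})$. Then there exists $B \subseteq A$ with $B \notin \mathcal{A}$ such that $\mathcal{A} \cup \{B\}$ is $\kappa$-independent and, moreover, $\mathcal{A}^h \cap B$ and $\mathcal{A}^h \setminus B$ are unbounded for all $h \in \mathrm{FF}_{<\omega,\kappa}(\mathcal{A})$. -/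
open Set Cardinal

/-- Finite partial functions from a family of sets to `{0,1}` (as `Option Bool`):
`h s = some true` means `s` is taken positively, `some false` negatively. -/
def FF {α : Type*} (𝒜 : Set (Set α)) : Set (Set α → Option Bool) :=
  {h | (∀ s, h s ≠ none → s ∈ 𝒜) ∧ {s | h s ≠ none}.Finite}

/-- The Boolean combination determined by a partial function `h`. -/
def bc {α : Type*} (h : Set α → Option Bool) : Set α :=
  {x | ∀ s : Set α, (h s = some true → x ∈ s) ∧ (h s = some false → x ∉ s)}

/-- `h'` extends `h` as a partial function. -/
def extFF {α : Type*} (h h' : Set α → Option Bool) : Prop :=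
  ∀ s b, h s = some b → h' s = some b

/-- A family is κ-independent if every finite Boolean combination is unbounded. -/
def kIndepF {α : Type*} [Preorder α] (𝒜 : Set (Set α)) : Prop :=
  ∀ h ∈ FF 𝒜, ¬ BddAbove (bc h)

/-!
List the finite Boolean combinations of `𝒜` in order type `κ`, each one cofinally often. By
recursion along `κ`, pick at stage `γ` two points `x γ < y γ` of `A` in the `γ`-th combination,
both above every point picked earlier: by regularity the fewer than `κ` earlier points are
bounded. Then `B = {x γ}` meets every combination cofinally, and so does its complement (through
the points `y γ`). This splitting property forces `B ∉ 𝒜` and, since every combination of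
`insert B 𝒜` contains a combination of `𝒜` intersected with `B` or with its complement, keeps
`insert B 𝒜` independent.
-/

universe u

lemma not_bddAbove_of_forall_le_mem {α : Type*} [Preorder α] {S Γ : Set α} {p : α → α}
    (hΓ : ¬ BddAbove Γ) (hp : ∀ γ ∈ Γ, γ ≤ p γ ∧ p γ ∈ S) : ¬ BddAbove S :=
  fun ⟨m, hm⟩ => hΓ ⟨m, fun γ hγ => (hp γ hγ).1.trans (hm (hp γ hγ).2)⟩

section FiniteBooleanCombinations

variable {α : Type*}

lemma mk_FF_le {𝒜 : Set (Set α)} [Infinite 𝒜] : #(FF 𝒜) ≤ #𝒜 := by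
  classical
  have hgraph : ∀ h : FF 𝒜, {p : 𝒜 × Bool | h.1 p.1 = some p.2}.Finite := fun h =>
    ((h.2.2.preimage Subtype.val_injective.injOn).prod finite_univ).subset
      fun p hp => ⟨fun hnone => Option.some_ne_none p.2 (hp.symm.trans hnone), trivial⟩
  have hinj : Function.Injective fun h : FF 𝒜 => (hgraph h).toFinset := by
    intro h h' hhh
    refine Subtype.ext (funext fun s => ?_)
    by_cases hs : s ∈ 𝒜
    · refine Option.ext fun b => ?_
      simpa using congrArg (fun t : Finset (𝒜 × Bool) => (⟨s, hs⟩, b) ∈ t) hhh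
    · rw [not_imp_comm.mp (h.2.1 s) hs, not_imp_comm.mp (h'.2.1 s) hs]
  calc #(FF 𝒜) ≤ #(Finset (𝒜 × Bool)) := mk_le_of_injective hinj
    _ = #𝒜 := by
      have h2 : (2 : Cardinal) ≤ #𝒜 := (natCast_lt_aleph0 (n := 2)).le.trans (aleph0_le_mk 𝒜)
      simpa [mk_finset_of_infinite] using mul_eq_left (aleph0_le_mk 𝒜) h2 two_ne_zero

variable [Preorder α] {𝒜 : Set (Set α)} {B : Set α}

lemma notMem_of_forall_not_bddAbove_inter [Nonempty α]
    (hB : ∀ h ∈ FF 𝒜, ¬ BddAbove (bc h ∩ B)) : B ∉ 𝒜 := by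
  classical
  intro hB𝒜
  let h : Set α → Option Bool := fun s => if s = B then some false else none
  have hFF : h ∈ FF 𝒜 := by
    refine ⟨fun s hs => ?_, (finite_singleton B).subset fun s hs => ?_⟩ <;>
      by_cases hsB : s = B <;> simp_all [h]
  have hempty : bc h ∩ B = ∅ :=
    eq_empty_of_forall_notMem fun z hz => (hz.1 B).2 (by simp [h]) hz.2
  exact hB h hFF (hempty ▸ bddAbove_empty)

lemma kIndepF_insert (hB : ∀ h ∈ FF 𝒜, ¬ BddAbove (bc h ∩ B) ∧ ¬ BddAbove (bc h \ B)) :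
    kIndepF (insert B 𝒜) := by
  classical
  intro h' hh'
  let h : Set α → Option Bool := fun s => if s = B then none else h' s
  have hFF : h ∈ FF 𝒜 := by
    refine ⟨fun s hs => ?_, hh'.2.subset fun s hs => ?_⟩ <;>
      by_cases hsB : s = B <;> simp_all [h]
    exact (hh'.1 s hs).resolve_left hsB
  have hbc : ∀ z ∈ bc h, (h' B = some true → z ∈ B) → (h' B = some false → z ∉ B) →
      z ∈ bc h' := by
    intro z hz htrue hfalse s
    by_cases hsB : s = B
    · exact hsB ▸ ⟨htrue, hfalse⟩
    · simpa [h, hsB] using hz s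
  by_cases hfalse : h' B = some false
  · exact fun hbdd => (hB h hFF).2 <| hbdd.mono fun z hz =>
      hbc z hz.1 (fun htrue => by simp_all) fun _ => hz.2
  · exact fun hbdd => (hB h hFF).1 <| hbdd.mono fun z hz =>
      hbc z hz.1 (fun _ => hz.2) fun h => absurd h hfalse

end FiniteBooleanCombinations

section RegularCardinal

variable {κ : Cardinal.{u}}

lemma bddAbove_of_mk_lt (hreg : κ.IsRegular) {S : Set κ.ord.ToType} (hS : #S < κ) :
    BddAbove S :=
  BddAbove.of_not_isCofinal fun hcof =>
    (Order.cof_le hcof).not_gt (by rwa [Ordinal.cof_toType, hreg.cof_ord])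

lemma mk_lt_of_bddAbove (hκ : ℵ₀ ≤ κ) {S : Set κ.ord.ToType} (hS : BddAbove S) :
    #S < κ := by
  obtain ⟨m, hm⟩ := hS
  have hIio : #(Iio m) < κ := by simpa using mk_Iio_lt m
  calc #S ≤ #(Iic m) := mk_le_mk_of_subset fun s hs => hm hs
    _ = #(Iio m) + 1 := by rw [← Iio_insert, mk_insert self_notMem_Iio]
    _ < κ := add_lt_of_lt hκ hIio (one_lt_aleph0.trans_le hκ)

lemma exists_forall_not_bddAbove_preimage {ι : Type u} [Nonempty ι] (hκ : ℵ₀ ≤ κ)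
    (hι : #ι ≤ κ) : ∃ e : κ.ord.ToType → ι, ∀ i, ¬ BddAbove (e ⁻¹' {i}) := by
  have hprod : #(κ.ord.ToType × ι) = #κ.ord.ToType := by
    rw [mk_prod, lift_id, lift_id, mk_ord_toType, Cardinal.mul_eq_left hκ hι (mk_ne_zero ι)]
  obtain ⟨q⟩ := Cardinal.eq.mp hprod.symm
  refine ⟨fun γ => (q γ).2, fun i hbdd => (mk_lt_of_bddAbove hκ hbdd).not_ge ?_⟩
  have hinj : Function.Injective fun a : κ.ord.ToType =>
      (⟨q.symm (a, i), by simp⟩ : (fun γ => (q γ).2) ⁻¹' {i}) :=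
    fun a b hab => by simpa using congrArg Subtype.val hab
  exact (mk_ord_toType κ).symm.le.trans (mk_le_of_injective hinj)

lemma exists_mem_forall_lt (hreg : κ.IsRegular) {U : κ.ord.ToType → Set κ.ord.ToType}
    (hU : ∀ γ, ¬ BddAbove (U γ)) (F : κ.ord.ToType → κ.ord.ToType → κ.ord.ToType) :
    ∃ x : κ.ord.ToType → κ.ord.ToType,
      ∀ γ, x γ ∈ U γ ∧ ∀ δ < γ, F δ (x δ) < x γ := by
  have step : ∀ γ (prev : ∀ δ, δ < γ → κ.ord.ToType),
      ∃ z ∈ U γ, ∀ δ (hδ : δ < γ), F δ (prev δ hδ) < z := by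
    intro γ prev
    obtain ⟨m, hm⟩ := bddAbove_of_mk_lt hreg (S := range fun δ : Iio γ => F δ (prev δ δ.2))
      (mk_range_le.trans_lt (by simpa using mk_Iio_lt γ))
    obtain ⟨z, hz, hmz⟩ := not_bddAbove_iff.mp (hU γ) m
    exact ⟨z, hz, fun δ hδ => (hm ⟨⟨δ, hδ⟩, rfl⟩).trans_lt hmz⟩
  choose f hfU hf using step
  let x := wellFounded_lt.fix f
  refine ⟨x, fun γ => ?_⟩
  rw [show x γ = f γ fun δ _ => x δ from wellFounded_lt.fix_eq f γ]
  exact ⟨hfU _ _, hf _ _⟩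

theorem exists_split_of_forall_not_bddAbove {ι : Type u} (hreg : κ.IsRegular) (hι : #ι ≤ κ)
    {U : ι → Set κ.ord.ToType} (hU : ∀ i, ¬ BddAbove (U i)) :
    ∃ B ⊆ ⋃ i, U i, ∀ i, ¬ BddAbove (U i ∩ B) ∧ ¬ BddAbove (U i \ B) := by
  rcases isEmpty_or_nonempty ι with hempty | hne
  · exact ⟨∅, empty_subset _, isEmptyElim⟩
  obtain ⟨e, he⟩ := exists_forall_not_bddAbove_preimage hreg.aleph0_le hι
  choose y hyU hlt using fun γ m => not_bddAbove_iff.mp (hU (e γ)) m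
  obtain ⟨x, hx⟩ := exists_mem_forall_lt hreg (fun γ => hU (e γ)) y
  have hxy : ∀ δ γ, δ < γ → y δ (x δ) < x γ := fun δ γ h => (hx γ).2 δ h
  have hxmono : StrictMono x := fun δ γ h => (hlt δ (x δ)).trans (hxy δ γ h)
  have hy_notMem : ∀ γ, y γ (x γ) ∉ range x := by
    rintro γ ⟨δ, hδ⟩
    rcases lt_trichotomy δ γ with h | rfl | h
    · exact ((hxmono h).trans (hlt γ (x γ))).ne hδ
    · exact (hlt δ (x δ)).ne hδ
    · exact (hxy γ δ h).ne' hδ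
  have hxU : range x ⊆ ⋃ i, U i := range_subset_iff.2 fun γ => mem_iUnion.2 ⟨e γ, (hx γ).1⟩
  refine ⟨range x, hxU, fun i => ⟨?_, ?_⟩⟩
  · refine not_bddAbove_of_forall_le_mem (p := x) (he i) fun γ (hγ : e γ = i) => ?_
    exact ⟨hxmono.le_apply, hγ ▸ (hx γ).1, γ, rfl⟩
  · refine not_bddAbove_of_forall_le_mem (p := fun γ => y γ (x γ)) (he i)
      fun γ (hγ : e γ = i) => ?_
    exact ⟨hxmono.le_apply.trans (hlt γ (x γ)).le, hγ ▸ hyU γ (x γ), hy_notMem γ⟩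

end RegularCardinal

theorem stmt_10_general (κ : Cardinal) (hreg : κ.IsRegular)
    (𝒜 : Set (Set κ.ord.ToType)) (hcard : #𝒜 = κ)
    (A : Set κ.ord.ToType)
    (hA : ∀ h ∈ FF 𝒜, ¬ BddAbove (bc h ∩ A)) :
    ∃ B : Set κ.ord.ToType, B ⊆ A ∧ B ∉ 𝒜 ∧ kIndepF (insert B 𝒜) ∧
      ∀ h ∈ FF 𝒜, ¬ BddAbove (bc h ∩ B) ∧ ¬ BddAbove (bc h \ B) := by
  have : Infinite 𝒜 := aleph0_le_mk_iff.mp (hreg.aleph0_le.trans_eq hcard.symm)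
  have : Nonempty κ.ord.ToType := Ordinal.nonempty_toType_iff.mpr hreg.ord_pos.ne'
  obtain ⟨B, hBA, hsplit⟩ := exists_split_of_forall_not_bddAbove hreg (mk_FF_le.trans hcard.le)
    (U := fun h : FF 𝒜 => bc h.1 ∩ A) fun h => hA h.1 h.2
  have hB : ∀ h ∈ FF 𝒜, ¬ BddAbove (bc h ∩ B) ∧ ¬ BddAbove (bc h \ B) := fun h hh =>
    ⟨fun hbdd => (hsplit ⟨h, hh⟩).1 (hbdd.mono (inter_subset_inter_left _ inter_subset_left)),
      fun hbdd => (hsplit ⟨h, hh⟩).2 (hbdd.mono (sdiff_subset_sdiff_left inter_subset_left))⟩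
  exact ⟨B, hBA.trans (iUnion_subset fun _ => inter_subset_right),
    notMem_of_forall_not_bddAbove_inter fun h hh => (hB h hh).1, kIndepF_insert hB, hB⟩

/-- Given a κ-independent family `𝒜` of size κ and a set `A` meeting every finite
Boolean combination unboundedly, there is `B ⊆ A`, `B ∉ 𝒜`, such that `𝒜 ∪ {B}` is
κ-independent; indeed every combination meets both `B` and its complement unboundedly. -/
theorem stmt_10 (κ : Cardinal) (hreg : κ.IsRegular) (hunc : ℵ₀ < κ)
    (𝒜 : Set (Set κ.ord.ToType)) (hsz : ∀ X ∈ 𝒜, #X = κ) (hcard : #𝒜 = κ)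
    (hind : kIndepF 𝒜) (A : Set κ.ord.ToType)
    (hA : ∀ h ∈ FF 𝒜, ¬ BddAbove (bc h ∩ A)) :
    ∃ B : Set κ.ord.ToType, B ⊆ A ∧ B ∉ 𝒜 ∧ kIndepF (insert B 𝒜) ∧
      ∀ h ∈ FF 𝒜, ¬ BddAbove (bc h ∩ B) ∧ ¬ BddAbove (bc h \ B) :=
  stmt_10_general κ hreg 𝒜 hcard A hA
end

section
/- Let $\kappa$ be measurable with normal measure $\mathcal{U}$, $\mathcal{A}$ a $\kappa$-independent family of cardinality $\kappa$, and $A \in \mathcal{U}$ such that $\mathcal{A}^h \cap A$ is unbounded for every $h \in \mathrm{FF}_{<\omega,\kappa}(\mathcal{A})$. Then for every bounded partition $\mathcal{E}$ of $\kappa$ there is $B \subseteq A$ with $B \in \mathcal{U}$ such that $\mathcal{A}^h \cap B$ is unbounded for every $h$, and $|B \cap P| \le 2$ for every $P \in \mathcal{E}$ (i.e., $B$ is a strong-semi-selector for $\mathcal{E}$). -/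
open Set Cardinal

/-- A normal measure on `κ`: a κ-complete ultrafilter on `κ` closed under
diagonal intersections. -/
structure NormalMeasure (κ : Cardinal) where
  sets : Set (Set κ.ord.ToType)
  univ_mem : Set.univ ∈ sets
  empty_notMem : ∅ ∉ sets
  mem_of_superset : ∀ {s t : Set κ.ord.ToType}, s ∈ sets → s ⊆ t → t ∈ sets
  ultra : ∀ s : Set κ.ord.ToType, s ∈ sets ∨ sᶜ ∈ sets
  complete : ∀ S : Set (Set κ.ord.ToType), S ⊆ sets → #S < κ → ⋂₀ S ∈ sets
  normal : ∀ A : κ.ord.ToType → Set κ.ord.ToType, (∀ i, A i ∈ sets) →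
    {x | ∀ i < x, x ∈ A i} ∈ sets

/-- A bounded partition of `κ`: a partition of `κ` into bounded pieces. -/
def BoundedPartition (κ : Cardinal) (𝓔 : Set (Set κ.ord.ToType)) : Prop :=
  (∀ P ∈ 𝓔, BddAbove P) ∧ ⋃₀ 𝓔 = Set.univ ∧
    (∀ P ∈ 𝓔, ∀ Q ∈ 𝓔, P ≠ Q → Disjoint P Q) ∧ ∅ ∉ 𝓔

/-! Give each point `x` an upper bound `bnd x` of its piece of `𝓔`. A set in which `x < y`
always forces `bnd x < y` meets every piece at most once. If `𝒰` is principal, its singleton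
is such a set; otherwise bounded sets are null and normality makes the diagonal intersection
`C = {x | ∀ i < x, bnd i < x}` one of measure one. Enumerating in order type `κ` all pairs of a
Boolean combination `h` and a bound `β`, a transfinite recursion picks `F i ∈ bc h ∩ A` above
`β` and above every earlier `bnd (F j)`; regularity of `κ` keeps every step possible. Then
`B = (C ∩ A) ∪ range F` meets every piece in at most two points. -/

lemma bddAbove_of_mk_lt_cof {α : Type*} [LinearOrder α] {s : Set α} (hs : #s < Order.cof α) :
    BddAbove s := by
  obtain ⟨x, hx⟩ := not_isCofinal_iff.mp fun h => (Order.cof_le h).not_gt hs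
  exact ⟨x, fun y hy => (hx y hy).le⟩

lemma bddAbove_range_of_isRegular {κ : Cardinal} (hκ : κ.IsRegular) (i : κ.ord.ToType)
    (f : Iio i → κ.ord.ToType) : BddAbove (range f) := by
  refine bddAbove_of_mk_lt_cof ?_
  rw [Ordinal.cof_toType, hκ.cof_ord]
  exact mk_range_le.trans_lt (by simpa using mk_Iio_lt i)

lemma mk_Iic_toType_ord_lt {κ : Cardinal} (hκ : ℵ₀ ≤ κ) (i : κ.ord.ToType) : #(Iic i) < κ := by
  rw [← Iio_insert]
  calc #(insert i (Iio i) : Set _) ≤ #(Iio i) + 1 := mk_insert_le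
    _ < κ := add_lt_of_lt hκ (by simpa using mk_Iio_lt i) (one_lt_aleph0.trans_le hκ)

lemma mk_FF_le_s13 {β : Type*} {𝒜 : Set (Set β)} (h𝒜 : ℵ₀ ≤ #𝒜) : #(FF 𝒜) ≤ #𝒜 := by
  let graph : FF 𝒜 → {t : Set (𝒜 × Bool) // t.Finite} := fun h =>
    ⟨{p | h.1 p.1 = some p.2},
      ((h.2.2.preimage Subtype.val_injective.injOn).prod finite_univ).subset
        fun p hp => ⟨by simp [show h.1 p.1 = some p.2 from hp], trivial⟩⟩
  have hgraph : Function.Injective graph := by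
    intro h₁ h₂ he
    ext1; funext s
    by_cases hs : s ∈ 𝒜
    · refine Option.ext fun b => ?_
      exact Set.ext_iff.mp (congrArg Subtype.val he) (⟨s, hs⟩, b)
    · rw [not_imp_comm.mp (h₁.2.1 s) hs, not_imp_comm.mp (h₂.2.1 s) hs]
  have : Infinite 𝒜 := aleph0_le_mk_iff.mp h𝒜
  calc #(FF 𝒜) ≤ #{t : Set (𝒜 × Bool) // t.Finite} := mk_le_of_injective hgraph
    _ = #(Finset (𝒜 × Bool)) := (OrderIso.finsetSetFinite.toEquiv.cardinal_eq).symm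
    _ = #𝒜 := by
      simp only [mk_finset_of_infinite, mk_prod, lift_uzero, mk_fintype, Fintype.card_bool,
        lift_natCast]
      exact Cardinal.mul_eq_left h𝒜 (natCast_lt_aleph0.le.trans h𝒜) two_ne_zero

lemma exists_surjective_toType_ord {κ : Cardinal} (hκ : ℵ₀ ≤ κ) {β : Type*} [Nonempty β]
    (hβ : #β ≤ κ) : ∃ π : κ.ord.ToType → β × κ.ord.ToType, π.Surjective := by
  have : Nonempty κ.ord.ToType := by
    rw [Ordinal.nonempty_toType_iff, Ne, ord_eq_zero]
    exact (aleph0_pos.trans_le hκ).ne'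
  refine Function.exists_surjective_iff.mpr ⟨inferInstance, le_def _ _ |>.mp ?_⟩
  rw [mk_prod, lift_id, lift_id, mk_ord_toType]
  exact (mul_le_mul' hβ le_rfl).trans (mul_eq_self hκ).le

lemma exists_bound_of_partition {α : Type*} [Preorder α] {𝓔 : Set (Set α)}
    (hbdd : ∀ P ∈ 𝓔, BddAbove P) (hcover : ⋃₀ 𝓔 = Set.univ)
    (hdisj : ∀ P ∈ 𝓔, ∀ Q ∈ 𝓔, P ≠ Q → Disjoint P Q) :
    ∃ bnd : α → α, (∀ x, x ≤ bnd x) ∧ ∀ P ∈ 𝓔, ∀ x ∈ P, ∀ y ∈ P, y ≤ bnd x := by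
  have hpiece : ∀ x, ∃ P ∈ 𝓔, x ∈ P := fun x => mem_sUnion.mp (by rw [hcover]; trivial)
  choose piece hpiece hmem using hpiece
  choose bnd hbnd using fun x => hbdd _ (hpiece x)
  have hbnd' : ∀ P ∈ 𝓔, ∀ x ∈ P, ∀ y ∈ P, y ≤ bnd x := by
    intro P hP x hx y hy
    obtain rfl : P = piece x := by_contra fun hne =>
      disjoint_left.mp (hdisj P hP _ (hpiece x) hne) hx (hmem x)
    exact hbnd x hy
  exact ⟨bnd, fun x => hbnd' _ (hpiece x) x (hmem x) x (hmem x), hbnd'⟩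

def IsSparse {α : Type*} [LT α] (bnd : α → α) (S : Set α) : Prop :=
  ∀ x ∈ S, ∀ y ∈ S, x < y → bnd x < y

section IsSparse

variable {α : Type*} [LinearOrder α] {bnd : α → α} {S T P : Set α}

lemma IsSparse.mono (hS : IsSparse bnd S) (hT : T ⊆ S) : IsSparse bnd T :=
  fun x hx y hy => hS x (hT hx) y (hT hy)

lemma IsSparse.subsingleton_inter (hS : IsSparse bnd S) (hP : ∀ x ∈ P, ∀ y ∈ P, y ≤ bnd x) :
    (S ∩ P).Subsingleton := by
  intro x hx y hy
  rcases lt_trichotomy x y with hxy | hxy | hxy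
  · exact absurd (hP x hx.2 y hy.2) (hS x hx.1 y hy.1 hxy).not_ge
  · exact hxy
  · exact absurd (hP y hy.2 x hx.2) (hS y hy.1 x hx.1 hxy).not_ge

lemma isSparse_range {ι : Type*} [LinearOrder ι] {F : ι → α} (hle : ∀ x, x ≤ bnd x)
    (hF : ∀ i, ∀ j < i, bnd (F j) < F i) : IsSparse bnd (range F) := by
  have hmono : StrictMono F := fun j i hji => (hle _).trans_lt (hF i j hji)
  rintro _ ⟨j, rfl⟩ _ ⟨i, rfl⟩ hji
  exact hF i j (hmono.lt_iff_lt.mp hji)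

end IsSparse

lemma mk_union_inter_le_two {α : Type*} {S T P : Set α} (hS : (S ∩ P).Subsingleton)
    (hT : (T ∩ P).Subsingleton) : #((S ∪ T) ∩ P : Set α) ≤ 2 := by
  rw [union_inter_distrib_right]
  calc _ ≤ #(S ∩ P : Set α) + #(T ∩ P : Set α) := mk_union_le _ _
    _ ≤ 1 + 1 := add_le_add (mk_le_one_iff_set_subsingleton.mpr hS)
        (mk_le_one_iff_set_subsingleton.mpr hT)
    _ = 2 := one_add_one_eq_two

lemma exists_mem_gt_of_not_bddAbove {α : Type*} [LinearOrder α] [WellFoundedLT α]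
    (hsmall : ∀ (i : α) (f : Iio i → α), BddAbove (range f)) {g : α → Set α}
    (hg : ∀ i, ¬BddAbove (g i)) (t bnd : α → α) :
    ∃ F : α → α, ∀ i, F i ∈ g i ∧ t i < F i ∧ ∀ j < i, bnd (F j) < F i := by
  have step : ∀ i (F : ∀ j, j < i → α),
      ∃ x ∈ g i, t i < x ∧ ∀ j (hj : j < i), bnd (F j hj) < x := by
    intro i F
    obtain ⟨b, hb⟩ := (bddAbove_insert (a := t i)).mpr (hsmall i fun j => bnd (F j.1 j.2))
    obtain ⟨x, hx, hbx⟩ := not_bddAbove_iff.mp (hg i) b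
    exact ⟨x, hx, (hb (mem_insert _ _)).trans_lt hbx,
      fun j hj => (hb (mem_insert_of_mem _ ⟨⟨j, hj⟩, rfl⟩)).trans_lt hbx⟩
  let F : α → α := wellFounded_lt.fix fun i F => (step i F).choose
  refine ⟨F, fun i => ?_⟩
  have hFi : F i = (step i fun j _ => F j).choose := wellFounded_lt.fix_eq _ i
  have hF := (step i fun j _ => F j).choose_spec
  rwa [← hFi] at hF

namespace NormalMeasure

variable {κ : Cardinal} (𝒰 : NormalMeasure κ)

lemma inter_mem (hκ : ℵ₀ ≤ κ) {s t : Set κ.ord.ToType} (hs : s ∈ 𝒰.sets) (ht : t ∈ 𝒰.sets) :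
    s ∩ t ∈ 𝒰.sets := by
  rw [← sInter_pair]
  refine 𝒰.complete _ ?_ (((finite_singleton t).insert s).lt_aleph0.trans_le hκ)
  rintro u (rfl | rfl) <;> assumption

lemma compl_mem_of_mk_lt (hfree : ∀ a, {a} ∉ 𝒰.sets) {D : Set κ.ord.ToType} (hD : #D < κ) :
    Dᶜ ∈ 𝒰.sets := by
  have hD' : Dᶜ = ⋂₀ ((fun a => {a}ᶜ) '' D) := by
    ext x
    simp only [sInter_image, mem_iInter, mem_compl_iff, mem_singleton_iff]
    exact ⟨fun hx a ha hxa => hx (hxa ▸ ha), fun h hx => h x hx rfl⟩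
  rw [hD']
  refine 𝒰.complete _ ?_ (mk_image_le.trans_lt hD)
  rintro _ ⟨a, -, rfl⟩
  exact (𝒰.ultra {a}).resolve_left (hfree a)

lemma exists_mem_isSparse (hκ : ℵ₀ ≤ κ) (bnd : κ.ord.ToType → κ.ord.ToType) :
    ∃ C ∈ 𝒰.sets, IsSparse bnd C := by
  by_cases hprin : ∃ a, {a} ∈ 𝒰.sets
  · obtain ⟨a, ha⟩ := hprin
    exact ⟨{a}, ha, fun x hx y hy hxy => absurd (hx.trans hy.symm) hxy.ne⟩
  · push Not at hprin
    refine ⟨_, 𝒰.normal (fun i => Ioi (bnd i)) fun i => ?_, fun x _ y hy hxy => hy x hxy⟩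
    rw [← compl_Iic]
    exact 𝒰.compl_mem_of_mk_lt hprin (mk_Iic_toType_ord_lt hκ _)

end NormalMeasure

theorem stmt_13_general (κ : Cardinal) (hreg : κ.IsRegular)
    (𝒰 : NormalMeasure κ)
    (𝒜 : Set (Set κ.ord.ToType)) (hcard : #𝒜 = κ)
    (A : Set κ.ord.ToType) (hAU : A ∈ 𝒰.sets)
    (hA : ∀ h ∈ FF 𝒜, ¬ BddAbove (bc h ∩ A))
    (𝓔 : Set (Set κ.ord.ToType)) (h𝓔 : BoundedPartition κ 𝓔) :
    ∃ B : Set κ.ord.ToType, B ⊆ A ∧ B ∈ 𝒰.sets ∧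
      (∀ h ∈ FF 𝒜, ¬ BddAbove (bc h ∩ B)) ∧
      ∀ P ∈ 𝓔, #(↥(B ∩ P)) ≤ 2 := by
  have hκ := hreg.aleph0_le
  obtain ⟨hbdd, hcover, hdisj, -⟩ := h𝓔
  obtain ⟨bnd, hle, hbnd⟩ := exists_bound_of_partition hbdd hcover hdisj
  obtain ⟨C, hCU, hC⟩ := 𝒰.exists_mem_isSparse hκ bnd
  have : Nonempty (FF 𝒜) := ⟨⟨fun _ => none, by simp [FF]⟩⟩
  obtain ⟨π, hπ⟩ := exists_surjective_toType_ord hκ (hcard ▸ mk_FF_le_s13 (hcard ▸ hκ))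
  obtain ⟨F, hF⟩ := exists_mem_gt_of_not_bddAbove (bddAbove_range_of_isRegular hreg)
    (fun i => hA _ (π i).1.2) (fun i => (π i).2) bnd
  refine ⟨C ∩ A ∪ range F, union_subset inter_subset_right ?_,
    𝒰.mem_of_superset (𝒰.inter_mem hκ hCU hAU) subset_union_left, ?_, fun P hP => ?_⟩
  · rintro _ ⟨i, rfl⟩
    exact (hF i).1.2
  · rintro h hh ⟨b, hb⟩
    obtain ⟨i, hi⟩ := hπ (⟨h, hh⟩, b)
    have hFi := hF i
    rw [hi] at hFi
    exact (hb ⟨hFi.1.1, Or.inr (mem_range_self i)⟩).not_gt hFi.2.1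
  · exact mk_union_inter_le_two ((hC.mono inter_subset_left).subsingleton_inter (hbnd P hP))
      ((isSparse_range hle fun i => (hF i).2.2).subsingleton_inter (hbnd P hP))

/-- Strong-semi-selector refinement: given `A ∈ 𝒰` meeting all Boolean combinations of
`𝒜` unboundedly and a bounded partition `𝓔`, there is `B ⊆ A` in `𝒰` still meeting
all combinations unboundedly with `|B ∩ P| ≤ 2` for each piece `P`. -/
theorem stmt_13 (κ : Cardinal) (hreg : κ.IsRegular) (hunc : ℵ₀ < κ)
    (𝒰 : NormalMeasure κ)
    (𝒜 : Set (Set κ.ord.ToType)) (hsz : ∀ X ∈ 𝒜, #X = κ) (hcard : #𝒜 = κ)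
    (hind : kIndepF 𝒜) (A : Set κ.ord.ToType) (hAU : A ∈ 𝒰.sets)
    (hA : ∀ h ∈ FF 𝒜, ¬ BddAbove (bc h ∩ A))
    (𝓔 : Set (Set κ.ord.ToType)) (h𝓔 : BoundedPartition κ 𝓔) :
    ∃ B : Set κ.ord.ToType, B ⊆ A ∧ B ∈ 𝒰.sets ∧
      (∀ h ∈ FF 𝒜, ¬ BddAbove (bc h ∩ B)) ∧
      ∀ P ∈ 𝓔, #(↥(B ∩ P)) ≤ 2 :=
  stmt_13_general κ hreg 𝒰 𝒜 hcard A hAU hA 𝓔 h𝓔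
end
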